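/- For all integers s ≥ 0 and t ≥ 0, setting p = 2s+1 and r = 2t+1, the following identity of rational numbers holds: 2^p · ∏_{i=1}^{r−1} (3p+3i+1)! / ( (3p+2i+1)! (p+2i)! ) · ∏_{i=1}^{t} (2p+2i)! (2i−1)! = [ A(p+r) · S(2(p+r), p) ] / [ A(p) · S(2p, p) ], where A(n) = ∏_{k=0}^{n−1} (3k+1)!/(n+k)! and, for odd p, S(L,p) = ∏_{ℓ=1}^{(p+1)/2} ∏_{k=ℓ}^{2ℓ−2} (L²−4k²) / ∏_{ℓ=0}^{(p−3)/2} (L² − (2ℓ+1)²)^{(p−1)/2−ℓ}. -/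

import Mathlib

open Finset

/-- The alternating sign matrix numbers A(n) = ∏_{k=0}^{n-1} (3k+1)!/(n+k)! (as a rational). -/
def ASM (n : ℕ) : ℚ :=
  ∏ k ∈ Finset.range n, ((3 * k + 1).factorial : ℚ) / ((n + k).factorial : ℚ)

/-- S(L, p) for even p = 2s:
S(L,p) = ∏_{ℓ=1}^{p/2} ∏_{k=ℓ}^{2ℓ−1} (L²−4k²) / ∏_{ℓ=0}^{p/2−1} (L²−(2ℓ+1)²)^(p/2−ℓ). -/
def SEven (L : ℕ) (s : ℕ) : ℚ :=
  (∏ l ∈ Finset.Icc 1 s, ∏ k ∈ Finset.Icc l (2 * l - 1),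
      ((L : ℚ) ^ 2 - 4 * (k : ℚ) ^ 2)) /
    ∏ l ∈ Finset.range s, ((L : ℚ) ^ 2 - (2 * (l : ℚ) + 1) ^ 2) ^ (s - l)

/-- S(L, p) for odd p = 2s+1:
S(L,p) = ∏_{ℓ=1}^{(p+1)/2} ∏_{k=ℓ}^{2ℓ−2} (L²−4k²) / ∏_{ℓ=0}^{(p−3)/2} (L²−(2ℓ+1)²)^((p−1)/2−ℓ). -/
def SOdd (L : ℕ) (s : ℕ) : ℚ :=
  (∏ l ∈ Finset.Icc 1 (s + 1), ∏ k ∈ Finset.Icc l (2 * l - 2),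
      ((L : ℚ) ^ 2 - 4 * (k : ℚ) ^ 2)) /
    ∏ l ∈ Finset.range s, ((L : ℚ) ^ 2 - (2 * (l : ℚ) + 1) ^ 2) ^ (s - l)

open scoped Nat

/-!
Fix `p = 2s + 1` and write `F(m) = A(m) · S(2m, p)` (`asmSOdd s m`). The left-hand side is
`2^p K(t)`, and `K(t + 1) / K(t)` is an explicit quotient of factorials; so it suffices that
`F(p + 1) = 2^p F(p)` and that `F(m + 2) / F(m)` is that quotient for `m = p + 2t + 1`
(it is, in fact, for every `m = p + n`).

`S(L, p)` is the product over `i < s` of `SOddFactor L i`, a ratio of two products of `i + 1`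
factors linear in `L²`. Shifting `L = 2m` to `2m + 2` telescopes each of these products, so
`S(2m + 2, p) / S(2m, p) = ∏_{j < s} SOddShiftFactor m j`. Two consecutive shifts combine into
`∏_{j < p} SOddShiftTwoFactor m j`, made of products over `p` consecutive integers, i.e. factorial
quotients, which together with `A(m + 2) / A(m)` give the Krattenthaler ratio. For the single
shift at `m = p`, the products are evaluated in closed form (three run over odd numbers only),
and everything cancels down to `2^p`.
-/

theorem prod_range_add_eq_factorial_div (a n : ℕ) :
    ∏ j ∈ range n, ((a : ℚ) + 1 + j) = (a + n)! / a ! := by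
  rw [eq_div_iff (by positivity)]
  induction n with
  | zero => simp
  | succ n ih =>
    rw [prod_range_succ, ← add_assoc, Nat.factorial_succ]
    push_cast
    linear_combination ((a : ℚ) + n + 1) * ih

theorem prod_range_sub_eq_factorial_div (a n : ℕ) :
    ∏ j ∈ range n, ((a : ℚ) + n - j) = (a + n)! / a ! := by
  rw [← prod_range_add_eq_factorial_div, ← prod_range_reflect]
  refine prod_congr rfl fun j hj => ?_
  have hj : j + 1 ≤ n := mem_range.mp hj
  rw [Nat.sub_sub, Nat.cast_sub (by omega)]
  push_cast
  ring

theorem prod_range_odd_eq_factorial_div (a n : ℕ) :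
    ∏ j ∈ range n, (2 * (a : ℚ) + 1 + 2 * j) =
      (2 * a + 2 * n)! * a ! / (2 ^ n * (2 * a)! * (a + n)!) := by
  rw [eq_div_iff (by positivity)]
  induction n with
  | zero => simp
  | succ n ih =>
    rw [prod_range_succ, show 2 * a + 2 * (n + 1) = 2 * a + 2 * n + 1 + 1 by ring,
      ← add_assoc, Nat.factorial_succ, Nat.factorial_succ, Nat.factorial_succ]
    push_cast
    linear_combination 2 * ((a : ℚ) + n + 1) * (2 * a + 2 * n + 1) * ih

theorem prod_range_odd_sub_eq_factorial_div (a n : ℕ) :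
    ∏ j ∈ range n, (2 * (a : ℚ) + 2 * n - 1 - 2 * j) =
      (2 * a + 2 * n)! * a ! / (2 ^ n * (2 * a)! * (a + n)!) := by
  rw [← prod_range_odd_eq_factorial_div, ← prod_range_reflect]
  refine prod_congr rfl fun j hj => ?_
  have hj : j + 1 ≤ n := mem_range.mp hj
  rw [Nat.sub_sub, Nat.cast_sub (by omega)]
  push_cast
  ring

theorem prod_range_mul_eq_mul_prod_succ {M : Type*} [CommMonoid M] (f : ℕ → M) (n : ℕ) :
    (∏ k ∈ range n, f k) * f n = f 0 * ∏ k ∈ range n, f (k + 1) := by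
  rw [← prod_range_succ, prod_range_succ', mul_comm]

def SOddFactor (L : ℚ) (i : ℕ) : ℚ :=
  (∏ b ∈ range (i + 1), (L ^ 2 - 4 * ((i : ℚ) + 2 + b) ^ 2)) /
    ∏ l ∈ range (i + 1), (L ^ 2 - (2 * (l : ℚ) + 1) ^ 2)

theorem SOdd_succ (L s : ℕ) : SOdd L (s + 1) = SOdd L s * SOddFactor L s := by
  have hnum : ∏ k ∈ Icc (s + 2) (2 * (s + 2) - 2), ((L : ℚ) ^ 2 - 4 * (k : ℚ) ^ 2) =
      ∏ b ∈ range (s + 1), ((L : ℚ) ^ 2 - 4 * ((s : ℚ) + 2 + b) ^ 2) := by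
    rw [← Ico_add_one_right_eq_Icc, prod_Ico_eq_prod_range,
      show 2 * (s + 2) - 2 + 1 - (s + 2) = s + 1 by omega]
    refine prod_congr rfl fun b _ => ?_
    push_cast
    ring
  set g : ℕ → ℚ := fun l => (L : ℚ) ^ 2 - (2 * (l : ℚ) + 1) ^ 2
  have hden : ∏ l ∈ range (s + 1), g l ^ (s + 1 - l) =
      (∏ l ∈ range s, g l ^ (s - l)) * ∏ l ∈ range (s + 1), g l := by
    calc ∏ l ∈ range (s + 1), g l ^ (s + 1 - l)
        = ∏ l ∈ range (s + 1), (g l ^ (s - l) * g l) := prod_congr rfl fun l hl => by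
          rw [← pow_succ, show s + 1 - l = s - l + 1 by have := mem_range.mp hl; omega]
      _ = _ := by
        rw [prod_mul_distrib, prod_range_succ (fun l => g l ^ (s - l)), Nat.sub_self, pow_zero,
          mul_one]
  rw [SOdd, SOdd, prod_Icc_succ_top (by omega), hnum, hden, SOddFactor, mul_div_mul_comm]

theorem SOdd_eq_prod (L s : ℕ) : SOdd L s = ∏ i ∈ range s, SOddFactor L i := by
  induction s with
  | zero => simp [SOdd]
  | succ s ih => rw [SOdd_succ, ih, prod_range_succ]

theorem SOddFactor_pos (L : ℚ) (i : ℕ) (hL : 4 * (i : ℚ) + 4 < L) : 0 < SOddFactor L i := by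
  refine div_pos (prod_pos fun b hb => ?_) (prod_pos fun l hl => ?_)
  · have : (b : ℚ) ≤ i := by exact_mod_cast Nat.lt_succ_iff.mp (mem_range.mp hb)
    nlinarith
  · have : (l : ℚ) ≤ i := by exact_mod_cast Nat.lt_succ_iff.mp (mem_range.mp hl)
    nlinarith

theorem SOdd_two_mul_pos {m s : ℕ} (h : 2 * s + 1 ≤ m) : 0 < SOdd (2 * m) s := by
  rw [SOdd_eq_prod]
  refine prod_pos fun i hi => SOddFactor_pos _ _ ?_
  have : i + 1 ≤ s := mem_range.mp hi
  push_cast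
  exact_mod_cast (by omega : 4 * i + 4 < 2 * m)

theorem prod_sq_sub_four_mul_sq_shift (x : ℚ) (i : ℕ) :
    (∏ b ∈ range (i + 1), ((2 * x + 2) ^ 2 - 4 * ((i : ℚ) + 2 + b) ^ 2)) *
        ((x - 2 - 2 * i) * (x + 2 + i)) =
      (∏ b ∈ range (i + 1), ((2 * x) ^ 2 - 4 * ((i : ℚ) + 2 + b) ^ 2)) *
        ((x - 1 - i) * (x + 3 + 2 * i)) := by
  have hminus : (∏ b ∈ range (i + 1), (x - i - 1 - b)) * (x - 2 - 2 * i) =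
      (x - 1 - i) * ∏ b ∈ range (i + 1), (x - i - 2 - b) := by
    convert prod_range_mul_eq_mul_prod_succ (fun b : ℕ => x - i - 1 - b) (i + 1) using 2
    · push_cast; ring
    · simp; ring
    · exact prod_congr rfl fun b _ => by push_cast; ring
  have hplus : (∏ b ∈ range (i + 1), (x + i + 2 + b)) * (x + 3 + 2 * i) =
      (x + 2 + i) * ∏ b ∈ range (i + 1), (x + i + 3 + b) := by
    convert prod_range_mul_eq_mul_prod_succ (fun b : ℕ => x + i + 2 + b) (i + 1) using 2
    · push_cast; ring
    · simp; ring
    · exact prod_congr rfl fun b _ => by push_cast; ring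
  rw [prod_congr rfl fun (b : ℕ) _ => show (2 * x + 2) ^ 2 - 4 * ((i : ℚ) + 2 + b) ^ 2 =
      4 * ((x - i - 1 - b) * (x + i + 3 + b)) by ring,
    prod_congr rfl fun (b : ℕ) _ => show (2 * x) ^ 2 - 4 * ((i : ℚ) + 2 + b) ^ 2 =
      4 * ((x - i - 2 - b) * (x + i + 2 + b)) by ring,
    prod_mul_distrib, prod_mul_distrib, prod_mul_distrib, prod_mul_distrib, prod_const]
  linear_combination (4 : ℚ) ^ #(range (i + 1)) *
    ((x + 2 + i) * (∏ b ∈ range (i + 1), (x + i + 3 + b)) * hminus -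
      (x - 1 - i) * (∏ b ∈ range (i + 1), (x - i - 2 - b)) * hplus)

theorem prod_sq_sub_odd_sq_shift (x : ℚ) (i : ℕ) :
    (∏ l ∈ range (i + 1), ((2 * x + 2) ^ 2 - (2 * (l : ℚ) + 1) ^ 2)) * (2 * x - 1 - 2 * i) =
      (∏ l ∈ range (i + 1), ((2 * x) ^ 2 - (2 * (l : ℚ) + 1) ^ 2)) * (2 * x + 3 + 2 * i) := by
  have hminus : (∏ l ∈ range (i + 1), (2 * x + 1 - 2 * l)) * (2 * x - 1 - 2 * i) =
      (2 * x + 1) * ∏ l ∈ range (i + 1), (2 * x - 1 - 2 * l) := by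
    convert prod_range_mul_eq_mul_prod_succ (fun l : ℕ => 2 * x + 1 - 2 * l) (i + 1) using 2
    · push_cast; ring
    · simp
    · exact prod_congr rfl fun l _ => by push_cast; ring
  have hplus : (∏ l ∈ range (i + 1), (2 * x + 1 + 2 * l)) * (2 * x + 3 + 2 * i) =
      (2 * x + 1) * ∏ l ∈ range (i + 1), (2 * x + 3 + 2 * l) := by
    convert prod_range_mul_eq_mul_prod_succ (fun l : ℕ => 2 * x + 1 + 2 * l) (i + 1) using 2
    · push_cast; ring
    · simp
    · exact prod_congr rfl fun l _ => by push_cast; ring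
  rw [prod_congr rfl fun (l : ℕ) _ => show (2 * x + 2) ^ 2 - (2 * (l : ℚ) + 1) ^ 2 =
      (2 * x + 1 - 2 * l) * (2 * x + 3 + 2 * l) by ring,
    prod_congr rfl fun (l : ℕ) _ => show (2 * x) ^ 2 - (2 * (l : ℚ) + 1) ^ 2 =
      (2 * x - 1 - 2 * l) * (2 * x + 1 + 2 * l) by ring,
    prod_mul_distrib, prod_mul_distrib]
  linear_combination (∏ l ∈ range (i + 1), (2 * x + 3 + 2 * (l : ℚ))) * hminus -
    (∏ l ∈ range (i + 1), (2 * x - 1 - 2 * (l : ℚ))) * hplus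

def SOddShiftFactor (x : ℚ) (j : ℕ) : ℚ :=
  (x - 1 - j) * (x + 3 + 2 * j) * (2 * x - 1 - 2 * j) /
    ((x - 2 - 2 * j) * (x + 2 + j) * (2 * x + 3 + 2 * j))

theorem SOddFactor_two_mul_add_two (x : ℚ) (i : ℕ) (hx : 2 * (i : ℚ) + 3 ≤ x) :
    SOddFactor (2 * x + 2) i = SOddFactor (2 * x) i * SOddShiftFactor x i := by
  have hden : ∀ y : ℚ, 2 * (i : ℚ) + 1 < y →
      0 < ∏ l ∈ range (i + 1), (y ^ 2 - (2 * (l : ℚ) + 1) ^ 2) := fun y hy =>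
    prod_pos fun l hl => by
      have : (l : ℚ) ≤ i := by exact_mod_cast Nat.lt_succ_iff.mp (mem_range.mp hl)
      nlinarith
  have hi : (0 : ℚ) ≤ i := i.cast_nonneg
  unfold SOddFactor SOddShiftFactor
  rw [div_mul_div_comm, div_eq_div_iff (hden _ (by linarith)).ne'
    (mul_pos (hden _ (by linarith)) (by apply mul_pos; apply mul_pos <;> linarith; linarith)).ne']
  linear_combination ((∏ l ∈ range (i + 1), ((2 * x) ^ 2 - (2 * (l : ℚ) + 1) ^ 2)) *
      (2 * x + 3 + 2 * i)) * prod_sq_sub_four_mul_sq_shift x i -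
    ((∏ b ∈ range (i + 1), ((2 * x) ^ 2 - 4 * ((i : ℚ) + 2 + b) ^ 2)) *
      ((x - 1 - i) * (x + 3 + 2 * i))) * prod_sq_sub_odd_sq_shift x i

theorem SOdd_two_mul_succ {m s : ℕ} (h : 2 * s + 1 ≤ m) :
    SOdd (2 * (m + 1)) s = SOdd (2 * m) s * ∏ j ∈ range s, SOddShiftFactor m j := by
  rw [SOdd_eq_prod, SOdd_eq_prod, ← prod_mul_distrib]
  refine prod_congr rfl fun i hi => ?_
  have : i + 1 ≤ s := mem_range.mp hi
  push_cast
  rw [mul_add_one, SOddFactor_two_mul_add_two]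
  exact_mod_cast (by omega : 2 * i + 3 ≤ m)

def SOddShiftTwoFactor (x : ℚ) (j : ℕ) : ℚ :=
  (2 * x - j) * (2 * x + 2 - j) * (x + 2 + j) / ((2 * x + 2 + j) * (2 * x + 4 + j) * (x - j))

theorem SOddShiftFactor_mul_SOddShiftFactor_add_one (x : ℚ) (s : ℕ)
    (hx : 2 * (s : ℚ) + 3 ≤ x) :
    SOddShiftFactor x s * SOddShiftFactor (x + 1) s =
      SOddShiftTwoFactor x (2 * s + 1) * SOddShiftTwoFactor x (2 * s + 2) := by
  have : (0 : ℚ) ≤ s := s.cast_nonneg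
  unfold SOddShiftFactor SOddShiftTwoFactor
  push_cast
  field_simp (disch := first | assumption | exact ne_of_gt (by linarith) | linarith)
  ring

theorem prod_SOddShiftFactor_mul_prod_add_one (x : ℚ) (s : ℕ)
    (hx : 2 * (s : ℚ) + 1 ≤ x) :
    (∏ j ∈ range s, SOddShiftFactor x j) * ∏ j ∈ range s, SOddShiftFactor (x + 1) j =
      ∏ j ∈ range (2 * s + 1), SOddShiftTwoFactor x j := by
  induction s with
  | zero =>
    push_cast at hx
    simp only [range_zero, prod_empty, mul_one, mul_zero, zero_add, range_one, prod_singleton,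
      SOddShiftTwoFactor, Nat.cast_zero, sub_zero, add_zero]
    field_simp (disch := first | assumption | exact ne_of_gt (by linarith) | linarith)
    ring
  | succ s ih =>
    push_cast at hx
    rw [prod_range_succ, prod_range_succ, show 2 * (s + 1) + 1 = 2 * s + 1 + 1 + 1 by ring,
      prod_range_succ, prod_range_succ, ← ih (by linarith), mul_mul_mul_comm,
      SOddShiftFactor_mul_SOddShiftFactor_add_one x s (by linarith)]
    ring

theorem SOdd_two_mul_add_two {s m : ℕ} (h : 2 * s + 1 ≤ m) :
    SOdd (2 * (m + 2)) s =
      SOdd (2 * m) s * ∏ j ∈ range (2 * s + 1), SOddShiftTwoFactor m j := by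
  rw [SOdd_two_mul_succ (m := m + 1) (by omega), SOdd_two_mul_succ h, mul_assoc,
    ← prod_SOddShiftFactor_mul_prod_add_one _ _ (by exact_mod_cast h)]
  push_cast
  rfl

theorem prod_range_SOddShiftTwoFactor (p n : ℕ) :
    ∏ j ∈ range p, SOddShiftTwoFactor (p + n : ℕ) j =
      (2 * (p + n))! * (2 * (p + n) + 2)! * (2 * p + n + 1)! * (2 * (p + n) + 1)! *
          (2 * (p + n) + 3)! * n ! /
        ((p + 2 * n)! * (p + 2 * n + 2)! * (p + n + 1)! * (3 * p + 2 * n + 1)! *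
          (3 * p + 2 * n + 3)! * (p + n)!) := by
  set x : ℚ := ((p + n : ℕ) : ℚ)
  have e₁ : ∏ j ∈ range p, (2 * x - j) = (2 * (p + n))! / (p + 2 * n)! := by
    convert prod_range_sub_eq_factorial_div (p + 2 * n) p using 3 <;> push_cast [x] <;> ring_nf
  have e₂ : ∏ j ∈ range p, (2 * x + 2 - j) = (2 * (p + n) + 2)! / (p + 2 * n + 2)! := by
    convert prod_range_sub_eq_factorial_div (p + 2 * n + 2) p using 3 <;> push_cast [x] <;> ring_nf
  have e₃ : ∏ j ∈ range p, (x + 2 + j) = (2 * p + n + 1)! / (p + n + 1)! := by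
    convert prod_range_add_eq_factorial_div (p + n + 1) p using 3 <;> push_cast [x] <;> ring_nf
  have e₄ : ∏ j ∈ range p, (2 * x + 2 + j) = (3 * p + 2 * n + 1)! / (2 * (p + n) + 1)! := by
    convert prod_range_add_eq_factorial_div (2 * (p + n) + 1) p using 3 <;>
      push_cast [x] <;> ring_nf
  have e₅ : ∏ j ∈ range p, (2 * x + 4 + j) = (3 * p + 2 * n + 3)! / (2 * (p + n) + 3)! := by
    convert prod_range_add_eq_factorial_div (2 * (p + n) + 3) p using 3 <;>
      push_cast [x] <;> ring_nf
  have e₆ : ∏ j ∈ range p, (x - j) = (p + n)! / n ! := by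
    convert prod_range_sub_eq_factorial_div n p using 3 <;> push_cast [x] <;> ring_nf
  simp only [SOddShiftTwoFactor, prod_div_distrib, prod_mul_distrib,
    e₁, e₂, e₃, e₄, e₅, e₆]
  field_simp

theorem prod_range_SOddShiftFactor_two_mul_add_one (s : ℕ) :
    ∏ j ∈ range s, SOddShiftFactor (2 * s + 1 : ℕ) j =
      2 ^ (2 * s) * (4 * s + 2)! * (4 * s + 4)! / ((6 * s + 4)! * (2 * s + 2)!) := by
  set x : ℚ := ((2 * s + 1 : ℕ) : ℚ)
  have e₁ : ∏ j ∈ range s, (x - 1 - j) = (2 * s)! / s ! := by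
    convert prod_range_sub_eq_factorial_div s s using 3 <;> push_cast [x] <;> ring_nf
  have e₂ : ∏ j ∈ range s, (x + 3 + 2 * j) = 2 ^ s * ((2 * s + 1)! / (s + 1)!) := by
    calc ∏ j ∈ range s, (x + 3 + 2 * j)
        = ∏ j ∈ range s, (2 * (((s + 1 : ℕ) : ℚ) + 1 + j)) :=
          prod_congr rfl fun j _ => by push_cast [x]; ring
      _ = _ := by
        rw [prod_mul_distrib, prod_const, card_range, prod_range_add_eq_factorial_div,
          show s + 1 + s = 2 * s + 1 by ring]
  have e₃ : ∏ j ∈ range s, (2 * x - 1 - 2 * j) =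
      (4 * s + 2)! * (s + 1)! / (2 ^ s * (2 * s + 2)! * (2 * s + 1)!) := by
    convert prod_range_odd_sub_eq_factorial_div (s + 1) s using 3 <;> push_cast [x] <;> ring_nf
  have e₄ : ∏ j ∈ range s, (x - 2 - 2 * j) = (2 * s)! / (2 ^ s * s !) := by
    convert prod_range_odd_sub_eq_factorial_div 0 s using 3 <;> push_cast [x] <;> ring_nf
  have e₅ : ∏ j ∈ range s, (x + 2 + j) = (3 * s + 2)! / (2 * s + 2)! := by
    convert prod_range_add_eq_factorial_div (2 * s + 2) s using 3 <;> push_cast [x] <;> ring_nf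
  have e₆ : ∏ j ∈ range s, (2 * x + 3 + 2 * j) =
      (6 * s + 4)! * (2 * s + 2)! / (2 ^ s * (4 * s + 4)! * (3 * s + 2)!) := by
    convert prod_range_odd_eq_factorial_div (2 * s + 2) s using 3 <;> push_cast [x] <;> ring_nf
  simp only [SOddShiftFactor, prod_div_distrib, prod_mul_distrib,
    e₁, e₂, e₃, e₄, e₅, e₆]
  rw [Nat.factorial_succ (2 * s + 1)]
  field_simp
  ring

theorem ASM_pos (n : ℕ) : 0 < ASM n :=
  prod_pos fun _ _ => by positivity

theorem ASM_succ_mul (n : ℕ) :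
    ASM (n + 1) * ((2 * n + 1)! * (2 * n)!) = ASM n * ((3 * n + 1)! * n !) := by
  have hden : (∏ k ∈ range (n + 1), ((n + 1 + k)! : ℚ)) * n ! =
      (∏ k ∈ range n, ((n + k)! : ℚ)) * ((2 * n)! * (2 * n + 1)!) := by
    have h := prod_range_succ' (fun k => ((n + k)! : ℚ)) (n + 1)
    rw [prod_range_succ, prod_range_succ] at h
    simp only [add_zero, ← add_assoc, add_right_comm n _ 1, ← two_mul] at h
    linear_combination -h
  unfold ASM
  rw [prod_div_distrib, prod_div_distrib, prod_range_succ (fun k => ((3 * k + 1)! : ℚ))]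
  rw [eq_div_of_mul_eq (by positivity) hden]
  field_simp

def asmSOdd (s m : ℕ) : ℚ := ASM m * SOdd (2 * m) s

theorem asmSOdd_pos {s m : ℕ} (h : 2 * s + 1 ≤ m) : 0 < asmSOdd s m :=
  mul_pos (ASM_pos m) (SOdd_two_mul_pos h)

theorem asmSOdd_succ_self (s : ℕ) :
    asmSOdd s (2 * s + 1 + 1) = 2 ^ (2 * s + 1) * asmSOdd s (2 * s + 1) := by
  have hA := ASM_succ_mul (2 * s + 1)
  unfold asmSOdd
  rw [SOdd_two_mul_succ le_rfl, prod_range_SOddShiftFactor_two_mul_add_one,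
    eq_div_of_mul_eq (by positivity) hA, show 4 * s + 4 = 2 * (2 * s + 1) + 1 + 1 by ring,
    show 2 * s + 2 = 2 * s + 1 + 1 by ring, Nat.factorial_succ (2 * (2 * s + 1) + 1),
    Nat.factorial_succ (2 * s + 1)]
  push_cast
  field_simp
  ring_nf

def krattenthalerFactor (p i : ℕ) : ℚ :=
  (3 * p + 3 * i + 1)! / ((3 * p + 2 * i + 1)! * (p + 2 * i)!)

theorem asmSOdd_add_two {p s : ℕ} (hp : p = 2 * s + 1) (n : ℕ) :
    asmSOdd s (p + n + 2) = asmSOdd s (p + n) *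
      (krattenthalerFactor p n * krattenthalerFactor p (n + 1) * ((2 * p + n + 1)! * n !)) := by
  have hA₁ := ASM_succ_mul (p + n)
  have hA₂ := ASM_succ_mul (p + n + 1)
  have hS := SOdd_two_mul_add_two (s := s) (m := p + n) (by omega)
  rw [← hp, prod_range_SOddShiftTwoFactor] at hS
  unfold asmSOdd krattenthalerFactor
  rw [hS, show p + n + 2 = p + n + 1 + 1 from rfl, eq_div_of_mul_eq (by positivity) hA₂,
    eq_div_of_mul_eq (by positivity) hA₁]
  field_simp
  ring_nf

def krattenthalerProduct (p t : ℕ) : ℚ :=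
  (∏ i ∈ Icc 1 (2 * t), krattenthalerFactor p i) *
    ∏ i ∈ Icc 1 t, ((2 * p + 2 * i)! * (2 * i - 1)! : ℚ)

theorem krattenthalerProduct_succ (p t : ℕ) :
    krattenthalerProduct p (t + 1) = krattenthalerProduct p t *
      (krattenthalerFactor p (2 * t + 1) * krattenthalerFactor p (2 * t + 1 + 1) *
        ((2 * p + (2 * t + 1) + 1)! * (2 * t + 1)!)) := by
  unfold krattenthalerProduct
  rw [show 2 * (t + 1) = 2 * t + 1 + 1 by ring, prod_Icc_succ_top (by omega),
    prod_Icc_succ_top (by omega), prod_Icc_succ_top (by omega),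
    show 2 * p + 2 * (t + 1) = 2 * p + (2 * t + 1) + 1 by ring,
    show 2 * (t + 1) - 1 = 2 * t + 1 by omega]
  ring

/-- p odd, r odd: Krattenthaler's formula for 𝓖_{p,r} (r odd case,
with the factor 2^p and products from i = 1) equals the Mitra–Nienhuis–de Gier–Batchelor
expression A(p+r)·S(2(p+r),p) / (A(p)·S(2p,p)), with p = 2s+1 and r = 2t+1. -/
theorem stmt11 (s t : ℕ) :
    (2 : ℚ) ^ (2 * s + 1) *
      (∏ i ∈ Finset.Icc 1 (2 * t),
        ((3 * (2 * s + 1) + 3 * i + 1).factorial : ℚ) /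
          (((3 * (2 * s + 1) + 2 * i + 1).factorial : ℚ) *
            ((2 * s + 1 + 2 * i).factorial : ℚ))) *
      ∏ i ∈ Finset.Icc 1 t,
        (((2 * (2 * s + 1) + 2 * i).factorial : ℚ) * ((2 * i - 1).factorial : ℚ)) =
    ASM (2 * s + 1 + (2 * t + 1)) * SOdd (2 * (2 * s + 1 + (2 * t + 1))) s /
      (ASM (2 * s + 1) * SOdd (2 * (2 * s + 1)) s) := by
  rw [mul_assoc]
  change 2 ^ (2 * s + 1) * krattenthalerProduct (2 * s + 1) t =
    asmSOdd s (2 * s + 1 + (2 * t + 1)) / asmSOdd s (2 * s + 1)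
  rw [eq_div_iff (asmSOdd_pos le_rfl).ne']
  induction t with
  | zero => simp [krattenthalerProduct, asmSOdd_succ_self]
  | succ t ih =>
    rw [krattenthalerProduct_succ,
      show 2 * s + 1 + (2 * (t + 1) + 1) = 2 * s + 1 + (2 * t + 1) + 2 by ring,
      asmSOdd_add_two rfl, ← ih]
    ring
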